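/- For d ≥ 2, let C be a pure d-dimensional 1-decomposable complex that is fully coned with respect to H with |H| ≥ d−2. Let e = {a,b} be a non-edge of skel(C) whose addition creates a new (d+1)-clique in skel(C)+e. Let D be the complex generated by the facets of C together with all (d+1)-cliques of skel(C)+e containing e. Then e is a shedding face of D, del_e(D) = C, and D is 1-decomposable and fully coned with respect to H with skel(D) = skel(C)+e. -/

import Mathlib

open Finset

variable {V : Type*} [DecidableEq V]

/-- A simplicial complex: a finite collection of finite faces closed under subsets. -/
def IsComplex (C : Finset (Finset V)) : Prop :=
  ∀ F ∈ C, ∀ G, G ⊆ F → G ∈ C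

/-- `F` is a facet (maximal face) of `C`. -/
def IsFacet (C : Finset (Finset V)) (F : Finset V) : Prop :=
  F ∈ C ∧ ∀ G ∈ C, F ⊆ G → F = G

/-- `C` is pure of dimension `d`: all facets have cardinality `d+1`. -/
def IsPure (C : Finset (Finset V)) (d : ℕ) : Prop :=
  ∀ F, IsFacet C F → F.card = d + 1

/-- The deletion of a face `F`: all faces not containing `F`. -/
def del (C : Finset (Finset V)) (F : Finset V) : Finset (Finset V) :=
  C.filter (fun G => ¬ F ⊆ G)

/-- The link of a face `F`. -/
def lk (C : Finset (Finset V)) (F : Finset V) : Finset (Finset V) :=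
  C.filter (fun G => G ∩ F = ∅ ∧ G ∪ F ∈ C)

/-- The simplicial complex generated by a collection of faces. -/
def gen (S : Finset (Finset V)) : Finset (Finset V) :=
  S.biUnion Finset.powerset

/-- `C` is a (full) simplex. -/
def IsSimplexCx (C : Finset (Finset V)) : Prop :=
  ∃ F : Finset V, C = F.powerset

/-- `F` is a shedding face of the pure `d`-dimensional complex `C`. -/
def Shedding (C : Finset (Finset V)) (d : ℕ) (F : Finset V) : Prop :=
  F ∈ C ∧ IsPure (del C F) d

/-- `k`-decomposability (Provan–Billera): a simplex, or there is a shedding face `F`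
with `dim F ≤ k` whose deletion and link are again `k`-decomposable. -/
inductive Decomp : ℕ → Finset (Finset V) → Prop
  | simplex (k : ℕ) (C : Finset (Finset V)) : IsSimplexCx C → Decomp k C
  | shed (k : ℕ) (C : Finset (Finset V)) (F : Finset V) (d : ℕ) :
      F ∈ C → F.Nonempty → F.card ≤ k + 1 → IsPure C d → IsPure (del C F) d →
      Decomp k (del C F) → Decomp k (lk C F) → Decomp k C

/-- The 1-dimensional skeleton of a complex, as a simple graph. -/
def skel (C : Finset (Finset V)) : SimpleGraph V where
  Adj x y := x ≠ y ∧ ({x, y} : Finset V) ∈ C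
  symm := by
    constructor
    rintro x y ⟨hxy, hm⟩
    exact ⟨hxy.symm, by rwa [Finset.pair_comm]⟩
  loopless := ⟨fun x h => h.1 rfl⟩

/-- A shelling of a pure `d`-dimensional complex: an ordering of the facets such that
each facet meets the union of the previous ones in a pure `(d-1)`-dimensional complex. -/
def IsShelling (C : Finset (Finset V)) (d : ℕ) (L : List (Finset V)) : Prop :=
  L.Nodup ∧ (∀ F, IsFacet C F ↔ F ∈ L) ∧
  ∀ i : ℕ, 1 ≤ i → ∀ h : i < L.length,
    IsPure (gen (L.take i).toFinset ∩ (L.get ⟨i, h⟩).powerset) (d - 1)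

open scoped Classical in
/-- `full^d(G)`: the pure `d`-dimensional complex generated by all `(d+1)`-cliques of `G`. -/
noncomputable def fullC [Fintype V] (d : ℕ) (G : SimpleGraph V) : Finset (Finset V) :=
  gen ((Finset.univ.powerset).filter fun s => G.IsClique (↑s : Set V) ∧ s.card = d + 1)

open scoped Classical in
/-- All `(d+1)`-cliques of `G` containing the set `e`. -/
noncomputable def cliquesWith [Fintype V] (d : ℕ) (G : SimpleGraph V) (e : Finset V) :
    Finset (Finset V) :=
  (Finset.univ.powerset).filter fun s => G.IsClique (↑s : Set V) ∧ s.card = d + 1 ∧ e ⊆ s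

/-- `G^H`: join every vertex of `H` to every other vertex. -/
def coneGraph (G : SimpleGraph V) (H : Finset V) : SimpleGraph V where
  Adj x y := x ≠ y ∧ (G.Adj x y ∨ x ∈ H ∨ y ∈ H)
  symm := by
    constructor
    rintro x y ⟨hxy, h⟩
    refine ⟨hxy.symm, ?_⟩
    rcases h with h | h | h
    · exact Or.inl (G.adj_symm h)
    · exact Or.inr (Or.inr h)
    · exact Or.inr (Or.inl h)
  loopless := ⟨fun x h => h.1 rfl⟩

/-- The graph `G` together with the extra edge `ab`. -/
def addEdge (G : SimpleGraph V) (a b : V) : SimpleGraph V :=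
  G ⊔ SimpleGraph.fromEdgeSet {s(a, b)}

/-- `C` is fully coned with respect to `H`: every vertex of `H` is adjacent to every other
vertex of `skel C`, and every `(d+1)`-clique of `skel C` is a facet of `C`. -/
def FullyConed (C : Finset (Finset V)) (d : ℕ) (H : Finset V) : Prop :=
  (∀ h ∈ H, ∀ v : V, ({v} : Finset V) ∈ C → v ≠ h → (skel C).Adj h v) ∧
  (∀ s : Finset V, (skel C).IsClique (↑s : Set V) → s.card = d + 1 → IsFacet C s)

/-!
A clique `t` of `skel C` with at most `d + 1` vertices is already a face of `C`: together with the
cone points `H` it spans a clique of `skel C` with at least `d + 1` vertices, after adding a facet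
through `t \ H` when `t` has at most two vertices outside `H`; a `(d+1)`-subclique containing `t`
is a facet. Hence the new cliques through `e` add no face avoiding `e`, i.e. `del_e D = C`, and
`t ↦ t ∪ e` identifies the link of `e` with the complex of cliques of size at most `d - 1` among
the common neighbours of `a` and `b`. In that complex `H` is again a set of cone points, and such
complexes are `1`-decomposable by induction on the number of vertices, shedding one vertex at a
time.
-/

lemma mem_gen {S : Finset (Finset V)} {F : Finset V} : F ∈ gen S ↔ ∃ s ∈ S, F ⊆ s := by
  simp [gen]

lemma exists_isFacet_superset (C : Finset (Finset V)) {F : Finset V} (hF : F ∈ C) :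
    ∃ G, IsFacet C G ∧ F ⊆ G := by
  obtain ⟨G, hG, hmax⟩ := (C.filter (F ⊆ ·)).exists_max_image card ⟨F, by simp [hF]⟩
  rw [mem_filter] at hG
  exact ⟨G, ⟨hG.1, fun G' hG' hGG' => eq_of_subset_of_card_le hGG'
    (hmax G' (mem_filter.2 ⟨hG', hG.2.trans hGG'⟩))⟩, hG.2⟩

lemma IsPure.card_le {C : Finset (Finset V)} {d : ℕ} (hP : IsPure C d) {F : Finset V}
    (hF : F ∈ C) : F.card ≤ d + 1 := by
  obtain ⟨G, hG, hFG⟩ := exists_isFacet_superset C hF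
  exact hP G hG ▸ card_le_card hFG

omit [DecidableEq V] in
lemma isFacet_of_card_eq {C : Finset (Finset V)} {n : ℕ} (hC : ∀ G ∈ C, G.card ≤ n)
    {F : Finset V} (hF : F ∈ C) (hFn : F.card = n) : IsFacet C F :=
  ⟨hF, fun G hG hFG => eq_of_subset_of_card_le hFG (hFn ▸ hC G hG)⟩

omit [DecidableEq V] in
lemma isPure_of_forall_subset_card_eq {C : Finset (Finset V)} {d : ℕ}
    (hext : ∀ F ∈ C, ∃ G ∈ C, F ⊆ G ∧ G.card = d + 1) :
    IsPure C d := by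
  intro F hF
  obtain ⟨G, hG, hFG, hGd⟩ := hext F hF.1
  rwa [hF.2 G hG hFG]

lemma isClique_skel_of_mem {C : Finset (Finset V)} (hC : IsComplex C) {F : Finset V}
    (hF : F ∈ C) : (skel C).IsClique (F : Set V) :=
  fun _ hx _ hy hxy => ⟨hxy, hC F hF _ (insert_subset hx (singleton_subset_iff.2 hy))⟩

lemma singleton_mem_of_mem_isClique {C : Finset (Finset V)} (hC : IsComplex C) {t : Finset V}
    (ht : (skel C).IsClique (t : Set V)) (ht2 : 2 ≤ t.card) {v : V} (hv : v ∈ t) :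
    {v} ∈ C := by
  obtain ⟨w, hw, hwv⟩ := exists_mem_ne ht2 v
  exact hC _ (ht hv hw hwv.symm).2 {v} (by simp)

lemma mem_of_isClique_of_card_le_two {C : Finset (Finset V)} (hC : IsComplex C)
    (hne : C.Nonempty) {t : Finset V} (ht : (skel C).IsClique (t : Set V))
    (htC : ∀ v ∈ t, {v} ∈ C) (ht2 : t.card ≤ 2) : t ∈ C := by
  obtain h0 | h1 | h2 : t.card = 0 ∨ t.card = 1 ∨ t.card = 2 := by omega
  · obtain ⟨F, hF⟩ := hne
    exact card_eq_zero.1 h0 ▸ hC F hF ∅ (empty_subset F)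
  · obtain ⟨v, rfl⟩ := card_eq_one.1 h1
    exact htC v (mem_singleton_self v)
  · obtain ⟨x, y, hxy, rfl⟩ := card_eq_two.1 h2
    exact (ht (by simp) (by simp) hxy).2

def IsUniversalIn (G : SimpleGraph V) (H : Finset V) (N : Set V) : Prop :=
  ∀ h ∈ H, ∀ v ∈ N, v ≠ h → G.Adj h v

omit [DecidableEq V] in
lemma IsUniversalIn.mono {G : SimpleGraph V} {H : Finset V} {N N' : Set V}
    (hU : IsUniversalIn G H N) (hN : N' ⊆ N) : IsUniversalIn G H N' :=
  fun h hh v hv => hU h hh v (hN hv)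

lemma IsUniversalIn.isClique_union {G : SimpleGraph V} {H : Finset V} {N : Set V}
    (hU : IsUniversalIn G H N) (hHN : ∀ h ∈ H, h ∈ N) {t : Finset V} (htN : ∀ v ∈ t, v ∈ N)
    (ht : G.IsClique (t : Set V)) : G.IsClique ((t ∪ H : Finset V) : Set V) := by
  intro x hx y hy hxy
  simp only [coe_union, Set.mem_union, mem_coe] at hx hy
  have hyN : y ∈ N := hy.elim (htN y) (hHN y)
  have hxN : x ∈ N := hx.elim (htN x) (hHN x)
  by_cases hxH : x ∈ H
  · exact hU x hxH y hyN hxy.symm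
  by_cases hyH : y ∈ H
  · exact (hU y hyH x hxN hxy).symm
  exact ht (hx.resolve_right hxH) (hy.resolve_right hyH) hxy

open scoped Classical in
noncomputable def smallCliques (G : SimpleGraph V) (N : Finset V) (m : ℕ) : Finset (Finset V) :=
  N.powerset.filter fun t => G.IsClique (t : Set V) ∧ t.card ≤ m

section smallCliques

variable {G : SimpleGraph V} {H N t : Finset V} {m : ℕ}

lemma mem_smallCliques :
    t ∈ smallCliques G N m ↔ t ⊆ N ∧ G.IsClique (t : Set V) ∧ t.card ≤ m := by
  classical
  simp [smallCliques]

lemma smallCliques_zero : smallCliques G N 0 = (∅ : Finset V).powerset := by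
  ext t
  simp only [mem_smallCliques, nonpos_iff_eq_zero, card_eq_zero, powerset_empty, mem_singleton]
  exact ⟨fun h => h.2.2, by rintro rfl; simp⟩

lemma smallCliques_eq_powerset (hN : G.IsClique (N : Set V)) (hm : N.card ≤ m) :
    smallCliques G N m = N.powerset := by
  ext t
  rw [mem_smallCliques, mem_powerset]
  exact ⟨fun h => h.1, fun h => ⟨h, hN.subset (coe_subset.2 h), (card_le_card h).trans hm⟩⟩

lemma del_smallCliques_singleton (v : V) :
    del (smallCliques G N m) {v} = smallCliques G (N.erase v) m := by
  ext t
  simp only [del, mem_filter, mem_smallCliques, singleton_subset_iff, subset_erase]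
  tauto

open scoped Classical in
lemma lk_smallCliques_singleton {v : V} (hv : v ∈ N) :
    lk (smallCliques G N (m + 1)) {v} = smallCliques G ((N.erase v).filter (G.Adj v)) m := by
  ext t
  have hunion : t ∪ {v} = insert v t := union_singleton v t
  have hdisj : t ∩ {v} = ∅ ↔ v ∉ t := by simp [eq_empty_iff_forall_notMem]
  simp only [lk, mem_filter, mem_smallCliques, hunion, hdisj, coe_insert,
    SimpleGraph.isClique_insert, insert_subset_iff]
  constructor
  · rintro ⟨-, hvt, ⟨-, htN⟩, ⟨ht, hvadj⟩, hcard⟩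
    rw [card_insert_of_notMem hvt] at hcard
    refine ⟨fun w hw => ?_, ht, by omega⟩
    have hwv : v ≠ w := fun h => hvt (h ▸ hw)
    exact mem_filter.2 ⟨mem_erase.2 ⟨hwv.symm, htN hw⟩, hvadj w hw hwv⟩
  · rintro ⟨htN', ht, hcard⟩
    have htN : t ⊆ N := fun w hw => mem_of_mem_erase (mem_filter.1 (htN' hw)).1
    have hvt : v ∉ t := fun h => (mem_erase.1 (mem_filter.1 (htN' h)).1).1 rfl
    rw [card_insert_of_notMem hvt]
    exact ⟨⟨htN, ht, by omega⟩, hvt, ⟨hv, htN⟩, ⟨ht, fun w hw _ => (mem_filter.1 (htN' hw)).2⟩,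
      by omega⟩

lemma exists_isClique_superset_card_eq (hU : IsUniversalIn G H N) (hHN : H ⊆ N)
    (hH : m ≤ H.card + 1) (hN : m ≤ N.card) (htN : t ⊆ N)
    (ht : G.IsClique (t : Set V)) (htm : t.card ≤ m) :
    ∃ t', t ⊆ t' ∧ t' ⊆ N ∧ G.IsClique (t' : Set V) ∧ t'.card = m := by
  obtain ⟨W, htW, hWN, hW, hmW⟩ :
      ∃ W, t ⊆ W ∧ W ⊆ N ∧ G.IsClique (W : Set V) ∧ m ≤ W.card := by
    by_cases hbig : m ≤ (t ∪ H).card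
    · exact ⟨t ∪ H, subset_union_left, union_subset htN hHN,
        hU.isClique_union (fun _ h => hHN h) (fun _ h => htN h) ht, hbig⟩
    · have htH : t ⊆ H := union_eq_right.1
        (eq_of_subset_of_card_le subset_union_right (by omega)).symm
      obtain ⟨w, hwN, hwH⟩ := not_subset.1 fun hNH : N ⊆ H => by
        have := card_le_card hNH
        have := card_le_card (subset_union_right (s₁ := t) (s₂ := H))
        omega
      refine ⟨{w} ∪ H, htH.trans subset_union_right, union_subset (by simpa) hHN,
        hU.isClique_union (fun _ h => hHN h) (by simpa) (by simp), ?_⟩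
      rw [card_union_of_disjoint (disjoint_singleton_left.2 hwH), card_singleton]
      omega
  obtain ⟨t', htt', ht'W, ht'm⟩ := exists_subsuperset_card_eq htW htm hmW
  exact ⟨t', htt', ht'W.trans hWN, hW.subset (coe_subset.2 ht'W), ht'm⟩

lemma isPure_smallCliques (hU : IsUniversalIn G H N) (hHN : H ⊆ N) {k : ℕ} (hH : k ≤ H.card)
    (hN : k + 1 ≤ N.card) : IsPure (smallCliques G N (k + 1)) k := by
  refine isPure_of_forall_subset_card_eq fun t ht => ?_
  obtain ⟨htN, ht, htk⟩ := mem_smallCliques.1 ht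
  obtain ⟨t', htt', ht'N, ht', ht'k⟩ :=
    exists_isClique_superset_card_eq hU hHN (by omega) hN htN ht htk
  exact ⟨t', mem_smallCliques.2 ⟨ht'N, ht', ht'k.le⟩, htt', ht'k⟩

lemma decomp_smallCliques (hU : IsUniversalIn G H N) (hHN : H ⊆ N) (hH : m ≤ H.card + 1)
    (hN : m ≤ N.card) : Decomp 1 (smallCliques G N m) := by
  classical
  induction N using Finset.strongInduction generalizing H m with
  | H N ih =>
  cases m with
  | zero => exact Decomp.simplex 1 _ ⟨∅, smallCliques_zero⟩
  | succ k =>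
  by_cases hNk : N.card = k + 1
  · obtain ⟨N', -, hN'N, hN', hN'k⟩ := exists_isClique_superset_card_eq hU hHN hH hN
      (empty_subset N) (by simp) (by simp)
    obtain rfl : N' = N := eq_of_subset_of_card_le hN'N (by omega)
    exact Decomp.simplex 1 _ ⟨N', smallCliques_eq_powerset hN' hNk.le⟩
  obtain ⟨v, hvN, hv⟩ : ∃ v ∈ N, k ≤ (H.erase v).card := by
    by_cases hNH : N ⊆ H
    · obtain ⟨v, hv⟩ : N.Nonempty := card_pos.1 (by omega)
      have := card_le_card hNH
      exact ⟨v, hv, by rw [card_erase_of_mem (hNH hv)]; omega⟩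
    · obtain ⟨v, hvN, hvH⟩ := not_subset.1 hNH
      exact ⟨v, hvN, by rw [erase_eq_of_notMem hvH]; omega⟩
  have hU' : IsUniversalIn G (H.erase v) (N.erase v) := fun h hh w hw =>
    hU h (mem_of_mem_erase hh) w (mem_of_mem_erase hw)
  have hHN' : H.erase v ⊆ N.erase v := erase_subset_erase v hHN
  have hNv : (N.erase v).card = N.card - 1 := card_erase_of_mem hvN
  set N' := (N.erase v).filter (G.Adj v)
  have hHN'' : H.erase v ⊆ N' := fun h hh => mem_filter.2
    ⟨hHN' hh, (hU h (mem_of_mem_erase hh) v hvN (ne_of_mem_erase hh).symm).symm⟩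
  refine Decomp.shed 1 _ {v} k (mem_smallCliques.2 ⟨by simpa, by simp, by simp⟩)
    (singleton_nonempty v) (by simp) (isPure_smallCliques hU hHN (by omega) (by omega)) ?_ ?_ ?_
  · rw [del_smallCliques_singleton]
    exact isPure_smallCliques hU' hHN' hv (by omega)
  · rw [del_smallCliques_singleton]
    exact ih _ (erase_ssubset hvN) hU' hHN' (by omega) (by omega)
  · rw [lk_smallCliques_singleton hvN]
    exact ih N' ((filter_subset _ _).trans_ssubset (erase_ssubset hvN))
      (hU'.mono (coe_subset.2 (filter_subset _ _))) hHN'' (by omega)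
      (hv.trans (card_le_card hHN''))

end smallCliques

section FullyConed

variable {C : Finset (Finset V)} {d : ℕ} {H : Finset V}

lemma FullyConed.singleton_mem (hC : IsComplex C) (hfc : FullyConed C d H) {a : V}
    (ha : {a} ∈ C) {h : V} (hh : h ∈ H) : {h} ∈ C := by
  by_cases hha : h = a
  · rwa [hha]
  · exact hC _ (hfc.1 h hh a ha (Ne.symm hha)).2 {h} (by simp)

lemma FullyConed.mem_of_isClique (hC : IsComplex C) (hP : IsPure C d) (hfc : FullyConed C d H)
    (hH : d - 2 ≤ H.card) {a : V} (ha : {a} ∈ C) {t : Finset V}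
    (ht : (skel C).IsClique (t : Set V)) (htC : ∀ v ∈ t, {v} ∈ C) (htd : t.card ≤ d + 1) :
    t ∈ C := by
  have hU : IsUniversalIn (skel C) H {v | ({v} : Finset V) ∈ C} := hfc.1
  have hHC : ∀ h ∈ H, {h} ∈ C := fun h hh => hfc.singleton_mem hC ha hh
  suffices ∃ W : Finset V, t ⊆ W ∧ (skel C).IsClique (W : Set V) ∧ d + 1 ≤ W.card by
    obtain ⟨W, htW, hW, hdW⟩ := this
    obtain ⟨w, htw, hwW, hwd⟩ := exists_subsuperset_card_eq htW htd hdW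
    exact hC w (hfc.2 w (hW.subset (coe_subset.2 hwW)) hwd).1 t htw
  by_cases h3 : 3 ≤ (t \ H).card
  · refine ⟨t ∪ H, subset_union_left, hU.isClique_union hHC htC ht, ?_⟩
    rw [← card_sdiff_add_card]
    omega
  · have htH : t \ H ∈ C := mem_of_isClique_of_card_le_two hC ⟨{a}, ha⟩
      (ht.subset (coe_subset.2 sdiff_subset)) (fun v hv => htC v (mem_sdiff.1 hv).1) (by omega)
    obtain ⟨F, hF, htF⟩ := exists_isFacet_superset C htH
    refine ⟨F ∪ H, fun v hv => ?_, hU.isClique_union hHC (fun v hv => hC F hF.1 {v} (by simpa))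
      (isClique_skel_of_mem hC hF.1), hP F hF ▸ card_le_card subset_union_left⟩
    by_cases hvH : v ∈ H
    · exact mem_union_right F hvH
    · exact mem_union_left H (htF (mem_sdiff.2 ⟨hv, hvH⟩))

end FullyConed

section addEdge

variable {G : SimpleGraph V} {a b x y : V}

omit [DecidableEq V] in
lemma addEdge_adj : (addEdge G a b).Adj x y ↔ G.Adj x y ∨ (s(x, y) = s(a, b) ∧ x ≠ y) := by
  simp [addEdge]

omit [DecidableEq V] in
lemma SimpleGraph.Adj.of_addEdge (h : (addEdge G a b).Adj x y) (hxa : x ≠ a) (hxb : x ≠ b) :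
    G.Adj x y := by
  rcases addEdge_adj.1 h with h | ⟨h, -⟩
  · exact h
  · rcases Sym2.eq_iff.1 h with ⟨rfl, -⟩ | ⟨rfl, -⟩ <;> contradiction

lemma SimpleGraph.IsClique.of_addEdge {s : Finset V} (hs : (addEdge G a b).IsClique (s : Set V))
    (hab : ¬ {a, b} ⊆ s) : G.IsClique (s : Set V) := by
  intro x hx y hy hxy
  rcases addEdge_adj.1 (hs hx hy hxy) with h | ⟨h, -⟩
  · exact h
  · rcases Sym2.eq_iff.1 h with ⟨rfl, rfl⟩ | ⟨rfl, rfl⟩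
    · exact absurd (insert_subset hx (singleton_subset_iff.2 hy)) hab
    · exact absurd (insert_subset hy (singleton_subset_iff.2 hx)) hab

lemma isClique_addEdge_union_pair (hab : a ≠ b) {t : Finset V} (ht : G.IsClique (t : Set V))
    (htab : ∀ v ∈ t, v ∈ G.commonNeighbors a b) :
    (addEdge G a b).IsClique ((t ∪ {a, b} : Finset V) : Set V) := by
  have hle : G ≤ addEdge G a b := le_sup_left
  rw [union_insert, union_singleton, coe_insert, coe_insert]
  refine ((ht.mono hle).insert fun v hv _ =>
    hle ((G.mem_commonNeighbors.1 (htab v hv)).2)).insert ?_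
  rintro v (rfl | hv) hav
  · exact addEdge_adj.2 (Or.inr ⟨rfl, hab⟩)
  · exact hle (G.mem_commonNeighbors.1 (htab v hv)).1

lemma card_union_pair (hab : a ≠ b) {t : Finset V} (ha : a ∉ t) (hb : b ∉ t) :
    (t ∪ {a, b}).card = t.card + 2 := by
  rw [union_insert, union_singleton, card_insert_of_notMem (by simp [hab, ha]),
    card_insert_of_notMem hb]

end addEdge

section edgeExtension

variable [Fintype V] {C : Finset (Finset V)} {d : ℕ} {H : Finset V} {a b : V}

lemma mem_cliquesWith {G : SimpleGraph V} {e s : Finset V} :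
    s ∈ cliquesWith d G e ↔ G.IsClique (s : Set V) ∧ s.card = d + 1 ∧ e ⊆ s := by
  simp [cliquesWith]

/-- The complex `D` of the statement. -/
noncomputable def edgeExtension (C : Finset (Finset V)) (d : ℕ) (a b : V) : Finset (Finset V) :=
  C ∪ gen (cliquesWith d (addEdge (skel C) a b) {a, b})

lemma mem_edgeExtension {F : Finset V} : F ∈ edgeExtension C d a b ↔
    F ∈ C ∨ ∃ s ∈ cliquesWith d (addEdge (skel C) a b) {a, b}, F ⊆ s := by
  rw [edgeExtension, mem_union, mem_gen]

lemma IsPure.card_le_of_mem_edgeExtension (hP : IsPure C d) {F : Finset V}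
    (hF : F ∈ edgeExtension C d a b) : F.card ≤ d + 1 := by
  rcases mem_edgeExtension.1 hF with hF | ⟨s, hs, hFs⟩
  · exact hP.card_le hF
  · exact (mem_cliquesWith.1 hs).2.1 ▸ card_le_card hFs

lemma singleton_mem_of_mem_cliquesWith (hC : IsComplex C) (hd : 2 ≤ d) (hab : a ≠ b)
    {s : Finset V} (hs : s ∈ cliquesWith d (addEdge (skel C) a b) {a, b}) {v : V} (hv : v ∈ s) :
    {v} ∈ C := by
  obtain ⟨hs, hsd, habs⟩ := mem_cliquesWith.1 hs
  -- removing an endpoint of the new edge leaves a clique of `skel C` with `d ≥ 2` vertices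
  obtain ⟨x, hx, hvx⟩ : ∃ x ∈ ({a, b} : Finset V), v ∈ s.erase x := by
    by_cases hvb : v = b
    · exact ⟨a, by simp, mem_erase.2 ⟨hvb ▸ hab.symm, hv⟩⟩
    · exact ⟨b, by simp, mem_erase.2 ⟨hvb, hv⟩⟩
  refine singleton_mem_of_mem_isClique hC
    ((hs.subset (coe_subset.2 (erase_subset x s))).of_addEdge fun h => notMem_erase x s (h hx))
    ?_ hvx
  rw [card_erase_of_mem (habs hx)]
  omega

lemma singleton_mem_of_mem_edgeExtension (hC : IsComplex C) (hd : 2 ≤ d) (hab : a ≠ b) {v : V}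
    (hv : {v} ∈ edgeExtension C d a b) : {v} ∈ C := by
  rcases mem_edgeExtension.1 hv with hv | ⟨s, hs, hvs⟩
  · exact hv
  · exact singleton_mem_of_mem_cliquesWith hC hd hab hs (singleton_subset_iff.1 hvs)

lemma skel_edgeExtension_adj (he : {a, b} ∈ edgeExtension C d a b) {x y : V} :
    (skel (edgeExtension C d a b)).Adj x y ↔ (addEdge (skel C) a b).Adj x y := by
  constructor
  · rintro ⟨hxy, hxyD⟩
    rcases mem_edgeExtension.1 hxyD with hxyC | ⟨s, hs, hxys⟩
    · exact addEdge_adj.2 (Or.inl ⟨hxy, hxyC⟩)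
    · exact (mem_cliquesWith.1 hs).1 (hxys (by simp)) (hxys (by simp)) hxy
  · intro h
    refine ⟨h.ne, ?_⟩
    rcases addEdge_adj.1 h with h | ⟨h, -⟩
    · exact mem_edgeExtension.2 (Or.inl h.2)
    · rcases Sym2.eq_iff.1 h with ⟨rfl, rfl⟩ | ⟨rfl, rfl⟩
      · exact he
      · rwa [pair_comm]

lemma del_edgeExtension (hC : IsComplex C) (hP : IsPure C d) (hfc : FullyConed C d H)
    (hH : d - 2 ≤ H.card) (hd : 2 ≤ d) (hab : a ≠ b) (hnot : ¬ (skel C).Adj a b)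
    (ha : {a} ∈ C) : del (edgeExtension C d a b) {a, b} = C := by
  ext F
  simp only [del, mem_filter, mem_edgeExtension]
  constructor
  · rintro ⟨hF | ⟨s, hs, hFs⟩, habF⟩
    · exact hF
    · obtain ⟨hsc, hsd, -⟩ := mem_cliquesWith.1 hs
      exact hfc.mem_of_isClique hC hP hH ha ((hsc.subset (coe_subset.2 hFs)).of_addEdge habF)
        (fun v hv => singleton_mem_of_mem_cliquesWith hC hd hab hs (hFs hv))
        (hsd ▸ card_le_card hFs)
  · exact fun hF => ⟨Or.inl hF, fun habF => hnot ⟨hab, hC F hF _ habF⟩⟩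

lemma isPure_edgeExtension (hP : IsPure C d) : IsPure (edgeExtension C d a b) d := by
  refine isPure_of_forall_subset_card_eq fun F hF => ?_
  rcases mem_edgeExtension.1 hF with hF | ⟨s, hs, hFs⟩
  · obtain ⟨G, hG, hFG⟩ := exists_isFacet_superset C hF
    exact ⟨G, mem_edgeExtension.2 (Or.inl hG.1), hFG, hP G hG⟩
  · exact ⟨s, mem_edgeExtension.2 (Or.inr ⟨s, hs, subset_rfl⟩), hFs, (mem_cliquesWith.1 hs).2.1⟩

lemma fullyConed_edgeExtension (hC : IsComplex C) (hP : IsPure C d) (hfc : FullyConed C d H)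
    (hd : 2 ≤ d) (hab : a ≠ b) (he : {a, b} ∈ edgeExtension C d a b) :
    FullyConed (edgeExtension C d a b) d H := by
  have hCD : C ⊆ edgeExtension C d a b := subset_union_left
  refine ⟨fun h hh v hv hvh => ?_, fun s hs hsd => ?_⟩
  · obtain ⟨hvh, hhv⟩ := hfc.1 h hh v (singleton_mem_of_mem_edgeExtension hC hd hab hv) hvh
    exact ⟨hvh, hCD hhv⟩
  · have hs' : (addEdge (skel C) a b).IsClique (s : Set V) := fun x hx y hy hxy =>
      (skel_edgeExtension_adj he).1 (hs hx hy hxy)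
    refine isFacet_of_card_eq (fun F hF => hP.card_le_of_mem_edgeExtension hF) ?_ hsd
    by_cases habs : {a, b} ⊆ s
    · exact mem_edgeExtension.2 (Or.inr ⟨s, mem_cliquesWith.2 ⟨hs', hsd, habs⟩, subset_rfl⟩)
    · exact hCD (hfc.2 s (hs'.of_addEdge habs) hsd).1

open scoped Classical in
lemma lk_edgeExtension (hC : IsComplex C) (hd : 2 ≤ d) (hab : a ≠ b)
    (hnot : ¬ (skel C).Adj a b)
    (hU : IsUniversalIn (skel C) H ((skel C).commonNeighbors a b).toFinset)
    (hHN : H ⊆ ((skel C).commonNeighbors a b).toFinset) (hH : d - 1 ≤ H.card + 1)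
    (hN : d - 1 ≤ ((skel C).commonNeighbors a b).toFinset.card) :
    lk (edgeExtension C d a b) {a, b} =
      smallCliques (skel C) ((skel C).commonNeighbors a b).toFinset (d - 1) := by
  set N := ((skel C).commonNeighbors a b).toFinset
  have haN : a ∉ N := by simpa [N] using (skel C).notMem_commonNeighbors_left a b
  have hbN : b ∉ N := by simpa [N] using (skel C).notMem_commonNeighbors_right a b
  ext t
  have hdisj : t ∩ {a, b} = ∅ ↔ a ∉ t ∧ b ∉ t := by
    simp only [eq_empty_iff_forall_notMem, mem_inter, mem_insert, mem_singleton]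
    exact ⟨fun h => ⟨fun ha => h a ⟨ha, Or.inl rfl⟩, fun hb => h b ⟨hb, Or.inr rfl⟩⟩,
      by rintro ⟨ha, hb⟩ v ⟨hv, rfl | rfl⟩ <;> contradiction⟩
  simp only [lk, mem_filter, hdisj, mem_smallCliques]
  constructor
  · rintro ⟨-, ⟨hat, hbt⟩, htD⟩
    obtain ⟨s, hs, hts⟩ := (mem_edgeExtension.1 htD).resolve_left fun h =>
      hnot ⟨hab, hC _ h _ subset_union_right⟩
    obtain ⟨hsc, hsd, -⟩ := mem_cliquesWith.1 hs
    have hts' : t ⊆ s := subset_union_left.trans hts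
    refine ⟨fun v hv => ?_, (hsc.subset (coe_subset.2 hts')).of_addEdge
      fun h => hat (h (mem_insert_self a {b})), ?_⟩
    · have hva : v ≠ a := fun h => hat (h ▸ hv)
      have hvb : v ≠ b := fun h => hbt (h ▸ hv)
      simp only [N, Set.mem_toFinset, SimpleGraph.mem_commonNeighbors]
      exact ⟨((hsc (hts' hv) (hts (by simp)) hva).of_addEdge hva hvb).symm,
        ((hsc (hts' hv) (hts (by simp)) hvb).of_addEdge hva hvb).symm⟩
    · have := card_le_card hts
      rw [card_union_pair hab hat hbt] at this
      omega
  · rintro ⟨htN, ht, htd⟩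
    obtain ⟨t', htt', ht'N, ht', ht'd⟩ := exists_isClique_superset_card_eq hU hHN hH hN htN ht htd
    have hs : t' ∪ {a, b} ∈ cliquesWith d (addEdge (skel C) a b) {a, b} := by
      refine mem_cliquesWith.2 ⟨isClique_addEdge_union_pair hab ht'
        fun v hv => Set.mem_toFinset.1 (ht'N hv), ?_, subset_union_right⟩
      rw [card_union_pair hab (fun h => haN (ht'N h)) (fun h => hbN (ht'N h))]
      omega
    exact ⟨mem_edgeExtension.2 (Or.inr ⟨_, hs, htt'.trans subset_union_left⟩),
      ⟨fun h => haN (htN h), fun h => hbN (htN h)⟩,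
      mem_edgeExtension.2 (Or.inr ⟨_, hs, union_subset_union htt' subset_rfl⟩)⟩

lemma decomp_lk_edgeExtension (hC : IsComplex C) (hfc : FullyConed C d H) (hH : d - 2 ≤ H.card)
    (hd : 2 ≤ d) (hab : a ≠ b) (hnot : ¬ (skel C).Adj a b) (ha : {a} ∈ C) (hb : {b} ∈ C)
    {s : Finset V} (hs : s ∈ cliquesWith d (addEdge (skel C) a b) {a, b}) :
    Decomp 1 (lk (edgeExtension C d a b) {a, b}) := by
  classical
  set N := ((skel C).commonNeighbors a b).toFinset
  have hmemN {v : V} : v ∈ N ↔ (skel C).Adj a v ∧ (skel C).Adj b v := by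
    simp [N, SimpleGraph.mem_commonNeighbors]
  have hU : IsUniversalIn (skel C) H N :=
    IsUniversalIn.mono (N := {v | ({v} : Finset V) ∈ C}) hfc.1 fun v hv =>
      hC _ (hmemN.1 hv).1.2 {v} (by simp)
  have hHN : H ⊆ N := fun h hh => by
    have hha : h ≠ a := fun h' => hnot (hfc.1 a (h' ▸ hh) b hb hab.symm)
    have hhb : h ≠ b := fun h' => hnot (hfc.1 b (h' ▸ hh) a ha hab).symm
    exact hmemN.2 ⟨(hfc.1 h hh a ha (Ne.symm hha)).symm, (hfc.1 h hh b hb (Ne.symm hhb)).symm⟩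
  obtain ⟨hsc, hsd, habs⟩ := mem_cliquesWith.1 hs
  have hN : d - 1 ≤ N.card := by
    have hsN : s \ {a, b} ⊆ N := fun v hv => by
      obtain ⟨hvs, hvab⟩ := mem_sdiff.1 hv
      have hva : v ≠ a := fun h => hvab (by simp [h])
      have hvb : v ≠ b := fun h => hvab (by simp [h])
      exact hmemN.2 ⟨((hsc hvs (habs (by simp)) hva).of_addEdge hva hvb).symm,
        ((hsc hvs (habs (by simp)) hvb).of_addEdge hva hvb).symm⟩
    have := card_le_card hsN
    rw [card_sdiff_of_subset habs, card_pair hab] at this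
    omega
  rw [lk_edgeExtension hC hd hab hnot hU hHN (by omega) hN]
  exact decomp_smallCliques hU hHN (by omega) hN

end edgeExtension

/-- Adding all `(d+1)`-cliques through a triangle-completing missing edge `e = {a,b}`
to a fully coned 1-decomposable complex yields a 1-decomposable fully coned complex `D`
with `e` as shedding face, `del_e D = C`, and skeleton `skel(C) + e`. -/
theorem fully_coned_missing_edge_extend [Fintype V] (C : Finset (Finset V)) (d : ℕ)
    (H : Finset V) (a b : V) (hd : 2 ≤ d)
    (hC : IsComplex C) (hP : IsPure C d) (hD : Decomp 1 C)
    (hfc : FullyConed C d H) (hH : d - 2 ≤ H.card)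
    (hab : a ≠ b) (hnot : ¬ (skel C).Adj a b)
    (hclique : ∃ s : Finset V, (addEdge (skel C) a b).IsClique (↑s : Set V) ∧
      s.card = d + 1 ∧ a ∈ s ∧ b ∈ s) :
    Shedding (C ∪ gen (cliquesWith d (addEdge (skel C) a b) {a, b})) d {a, b} ∧
    del (C ∪ gen (cliquesWith d (addEdge (skel C) a b) {a, b})) {a, b} = C ∧
    Decomp 1 (C ∪ gen (cliquesWith d (addEdge (skel C) a b) {a, b})) ∧
    IsPure (C ∪ gen (cliquesWith d (addEdge (skel C) a b) {a, b})) d ∧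
    FullyConed (C ∪ gen (cliquesWith d (addEdge (skel C) a b) {a, b})) d H ∧
    ∀ x y : V, (skel (C ∪ gen (cliquesWith d (addEdge (skel C) a b) {a, b}))).Adj x y ↔
      (addEdge (skel C) a b).Adj x y := by
  rw [show C ∪ gen (cliquesWith d (addEdge (skel C) a b) {a, b}) = edgeExtension C d a b from rfl]
  obtain ⟨s, hs, hsd, has, hbs⟩ := hclique
  have habs : {a, b} ⊆ s := insert_subset has (singleton_subset_iff.2 hbs)
  have hsK : s ∈ cliquesWith d (addEdge (skel C) a b) {a, b} := mem_cliquesWith.2 ⟨hs, hsd, habs⟩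
  have he : {a, b} ∈ edgeExtension C d a b := mem_edgeExtension.2 (Or.inr ⟨s, hsK, habs⟩)
  have ha := singleton_mem_of_mem_cliquesWith hC hd hab hsK has
  have hb := singleton_mem_of_mem_cliquesWith hC hd hab hsK hbs
  have hdel := del_edgeExtension hC hP hfc hH hd hab hnot ha
  have hPD : IsPure (edgeExtension C d a b) d := isPure_edgeExtension hP
  have hPdel : IsPure (del (edgeExtension C d a b) {a, b}) d := by rwa [hdel]
  refine ⟨⟨he, hPdel⟩, hdel, ?_, hPD, fullyConed_edgeExtension hC hP hfc hd hab he,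
    fun x y => skel_edgeExtension_adj he⟩
  exact Decomp.shed 1 _ {a, b} d he (insert_nonempty a {b}) (card_pair hab).le hPD hPdel
    (by rwa [hdel]) (decomp_lk_edgeExtension hC hfc hH hd hab hnot ha hb hsK)
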